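/- arXiv:2511.00557 — 6 statements merged into one kernel-verified Lean document; each statement's English description precedes it below -/
import Mathlib

section
/- Let y(t) = e^{-tA} y⁰ solve y' = -Ay and let ỹ solve ỹ' + ε ỹ'' = -A ỹ with ỹ(0) = y⁰, ỹ'(0) = y'(0), where A is symmetric positive semidefinite with smallest eigenvalue ω. Then ‖y(t) - ỹ(t)‖₂ ≤ ε t φ(-ωt) max_{s∈[0,t]} ‖ỹ''(s)‖₂. -/
open NormedSpace Matrix

/-- The function φ(z) = (e^z - 1)/z with φ(0) = 1. -/
noncomputable def phi (z : ℝ) : ℝ := if z = 0 then 1 else (Real.exp z - 1) / z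

section Aux

variable {N : ℕ}

lemma phi_nonneg (z : ℝ) : 0 ≤ phi z := by
  unfold phi
  rcases lt_trichotomy z 0 with h | h | h
  · rw [if_neg (ne_of_lt h)]
    apply div_nonneg_of_nonpos _ h.le
    simp only [sub_nonpos]
    exact (Real.exp_le_one_iff).mpr h.le
  · simp [h]
  · rw [if_neg (ne_of_gt h)]
    apply div_nonneg _ h.le
    simp only [sub_nonneg]
    exact Real.one_le_exp h.le

lemma integral_exp_eq (t ω : ℝ) (ht : 0 ≤ t) :
    ∫ s in (0:ℝ)..t, Real.exp ((s - t) * ω) = t * phi (-(ω * t)) := by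
  by_cases hω : ω = 0
  · simp [hω, phi]
  rcases eq_or_lt_of_le ht with rfl | ht'
  · simp
  have hderiv : ∀ s ∈ Set.uIcc (0:ℝ) t,
      HasDerivAt (fun s => Real.exp ((s - t) * ω) / ω) (Real.exp ((s - t) * ω)) s := by
    intro s _
    have h := (((hasDerivAt_id s).sub_const t).mul_const ω).exp.div_const ω
    exact h.congr_deriv (by simp [hω])
  rw [intervalIntegral.integral_eq_sub_of_hasDerivAt hderiv
    ((Real.continuous_exp.comp (by continuity)).intervalIntegrable 0 t)]
  have hne : -(ω * t) ≠ 0 := by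
    simp only [neg_ne_zero]
    exact mul_ne_zero hω (ne_of_gt ht')
  rw [phi, if_neg hne]
  field_simp
  ring_nf
  simp

lemma unitary_isometry (W : Matrix (Fin N) (Fin N) ℝ) (hW : W ∈ Matrix.unitaryGroup (Fin N) ℝ)
    (x : EuclideanSpace ℝ (Fin N)) : ‖toEuclideanCLM (𝕜 := ℝ) W x‖ = ‖x‖ := by
  have h1 : star W * W = 1 := Matrix.mem_unitaryGroup_iff'.mp hW
  have key : (inner ℝ (toEuclideanCLM (𝕜 := ℝ) W x) (toEuclideanCLM (𝕜 := ℝ) W x) : ℝ)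
      = inner ℝ x x := by
    rw [← ContinuousLinearMap.adjoint_inner_left, ← ContinuousLinearMap.star_eq_adjoint,
      ← map_star, ← ContinuousLinearMap.comp_apply, ← ContinuousLinearMap.mul_def,
      ← _root_.map_mul, h1, _root_.map_one, ContinuousLinearMap.one_apply]
  rw [real_inner_self_eq_norm_sq, real_inner_self_eq_norm_sq] at key
  nlinarith [norm_nonneg (toEuclideanCLM (𝕜 := ℝ) W x), norm_nonneg x]

lemma diagonal_norm_le (d : Fin N → ℝ) (c : ℝ) (hc : 0 ≤ c) (hd : ∀ i, |d i| ≤ c)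
    (x : EuclideanSpace ℝ (Fin N)) : ‖toEuclideanCLM (𝕜 := ℝ) (diagonal d) x‖ ≤ c * ‖x‖ := by
  have happ : ∀ i, (toEuclideanCLM (𝕜 := ℝ) (diagonal d) x) i = d i * x i := by
    intro i
    have := congrFun (ofLp_toEuclideanCLM (diagonal d) x) i
    simpa [Matrix.toLin'_apply, Matrix.mulVec_diagonal] using this
  rw [EuclideanSpace.norm_eq, EuclideanSpace.norm_eq,
    ← Real.sqrt_sq hc, ← Real.sqrt_mul (by positivity)]
  apply Real.sqrt_le_sqrt
  rw [Finset.mul_sum]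
  apply Finset.sum_le_sum
  intro i _
  rw [happ i]
  have h2 : ‖d i * x i‖ ≤ c * ‖x i‖ := by
    rw [norm_mul]
    exact mul_le_mul_of_nonneg_right (hd i) (norm_nonneg _)
  calc ‖d i * x i‖ ^ 2 ≤ (c * ‖x i‖)^2 := pow_le_pow_left₀ (norm_nonneg _) h2 2
    _ = c^2 * ‖x i‖^2 := by ring

lemma exp_matrix_norm_le (A : Matrix (Fin N) (Fin N) ℝ) (hA : A.IsHermitian) (ω u : ℝ)
    (hω : ∀ i, ω ≤ hA.eigenvalues i) (hu : u ≤ 0) (v : EuclideanSpace ℝ (Fin N)) :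
    ‖toEuclideanCLM (𝕜 := ℝ) (exp (u • A)) v‖ ≤ Real.exp (u * ω) * ‖v‖ := by
  set U : Matrix (Fin N) (Fin N) ℝ := (hA.eigenvectorUnitary : Matrix (Fin N) (Fin N) ℝ) with hU
  have hUmem : U ∈ Matrix.unitaryGroup (Fin N) ℝ := (hA.eigenvectorUnitary).2
  have hUstar : U * star U = 1 := Matrix.mem_unitaryGroup_iff.mp hUmem
  have hUunit : IsUnit U := ⟨⟨U, star U, hUstar, Matrix.mem_unitaryGroup_iff'.mp hUmem⟩, rfl⟩
  have hinv : U⁻¹ = star U := Matrix.inv_eq_right_inv hUstar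
  have hspec : u • A = U * diagonal (fun i => u * hA.eigenvalues i) * U⁻¹ := by
    rw [hinv]
    conv_lhs => rw [hA.spectral_theorem]
    rw [Unitary.conjStarAlgAut_apply]
    rw [← smul_mul_assoc, ← mul_smul_comm]
    congr 2
    rw [← Matrix.diagonal_smul]
    exact congrArg diagonal (funext fun i => by simp)
  rw [hspec, Matrix.exp_conj U _ hUunit, Matrix.exp_diagonal, hinv]
  have hdiag : (exp fun i => u * hA.eigenvalues i) = fun i => Real.exp (u * hA.eigenvalues i) := by
    ext i
    rw [Pi.coe_exp, Real.exp_eq_exp_ℝ]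
  rw [hdiag, _root_.map_mul, _root_.map_mul, ContinuousLinearMap.mul_apply,
    ContinuousLinearMap.mul_apply, unitary_isometry U hUmem]
  have hstar : star U ∈ Matrix.unitaryGroup (Fin N) ℝ := Unitary.star_mem hUmem
  calc ‖toEuclideanCLM (𝕜 := ℝ) (diagonal fun i => Real.exp (u * hA.eigenvalues i))
        (toEuclideanCLM (𝕜 := ℝ) (star U) v)‖
      ≤ Real.exp (u * ω) * ‖toEuclideanCLM (𝕜 := ℝ) (star U) v‖ := by
        apply diagonal_norm_le _ _ (Real.exp_nonneg _)
        intro i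
        rw [abs_of_nonneg (Real.exp_nonneg _), Real.exp_le_exp]
        exact mul_le_mul_of_nonpos_left (hω i) hu
    _ = Real.exp (u * ω) * ‖v‖ := by rw [unitary_isometry (star U) hstar]

lemma toCLM_exp (M : Matrix (Fin N) (Fin N) ℝ) :
    toEuclideanCLM (𝕜 := ℝ) (exp M) = exp (toEuclideanCLM (𝕜 := ℝ) M) := by
  letI : SeminormedRing (Matrix (Fin N) (Fin N) ℝ) := Matrix.linftyOpSemiNormedRing
  letI : NormedRing (Matrix (Fin N) (Fin N) ℝ) := Matrix.linftyOpNormedRing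
  letI : NormedAlgebra ℝ (Matrix (Fin N) (Fin N) ℝ) := Matrix.linftyOpNormedAlgebra
  letI : NormedAlgebra ℚ (Matrix (Fin N) (Fin N) ℝ) := NormedAlgebra.restrictScalars ℚ ℝ _
  have hcont : Continuous (toEuclideanCLM (𝕜 := ℝ) (n := Fin N)) := by
    let f : Matrix (Fin N) (Fin N) ℝ →ₗ[ℝ]
        (EuclideanSpace ℝ (Fin N) →L[ℝ] EuclideanSpace ℝ (Fin N)) :=
      { toFun := toEuclideanCLM (𝕜 := ℝ), map_add' := fun x y => map_add _ x y,
        map_smul' := fun c x => map_smul _ c x }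
    exact f.continuous_of_finiteDimensional
  exact map_exp (toEuclideanCLM (𝕜 := ℝ) (n := Fin N)).toRingEquiv hcont M

end Aux

set_option synthInstance.maxHeartbeats 1000000 in
set_option maxHeartbeats 2000000 in
/-- Let `y(t) = e^{-tA} y⁰` solve `y' = -Ay`, and let `ỹ` solve the perturbed problem
`ỹ' + ε ỹ'' = -A ỹ`, `ỹ(0) = y⁰`, `ỹ'(0) = y'(0) = -A y⁰`.  Then
`‖y(t) - ỹ(t)‖ ≤ ε t φ(-ωt) max_{s∈[0,t]} ‖ỹ''(s)‖`. -/
theorem stmt_5 (N : ℕ) (A : Matrix (Fin N) (Fin N) ℝ) (hA : A.PosSemidef)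
    (ω : ℝ) (hω_mem : ω ∈ spectrum ℝ A) (hω_min : ∀ μ ∈ spectrum ℝ A, ω ≤ μ)
    (ε : ℝ) (hε : 0 < ε) (t : ℝ) (ht : 0 ≤ t)
    (y0 : EuclideanSpace ℝ (Fin N))
    (ytil ytil' ytil'' : ℝ → EuclideanSpace ℝ (Fin N))
    (hd1 : ∀ s ∈ Set.Icc 0 t, HasDerivAt ytil (ytil' s) s)
    (hd2 : ∀ s ∈ Set.Icc 0 t, HasDerivAt ytil' (ytil'' s) s)
    (hcont : ContinuousOn ytil'' (Set.Icc 0 t))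
    (heq : ∀ s ∈ Set.Icc 0 t,
      ytil' s + ε • ytil'' s = -(Matrix.toEuclideanCLM (𝕜 := ℝ) A) (ytil s))
    (hinit0 : ytil 0 = y0)
    (hinit1 : ytil' 0 = -(Matrix.toEuclideanCLM (𝕜 := ℝ) A) y0) :
    ‖Matrix.toEuclideanCLM (𝕜 := ℝ) (NormedSpace.exp (-(t • A))) y0 - ytil t‖ ≤
      ε * t * phi (-(ω * t)) * sSup ((fun s => ‖ytil'' s‖) '' Set.Icc 0 t) := by
  set B := Matrix.toEuclideanCLM (𝕜 := ℝ) A with hB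
  set E : ℝ → (EuclideanSpace ℝ (Fin N) →L[ℝ] EuclideanSpace ℝ (Fin N)) :=
    fun s => exp ((s - t) • B) with hE
  set M := sSup ((fun s => ‖ytil'' s‖) '' Set.Icc 0 t) with hM
  have hIcc : Set.uIcc (0:ℝ) t = Set.Icc 0 t := Set.uIcc_of_le ht
  have hMle : ∀ s ∈ Set.Icc (0:ℝ) t, ‖ytil'' s‖ ≤ M := fun s hs =>
    le_csSup (IsCompact.bddAbove_image isCompact_Icc hcont.norm) ⟨s, hs, rfl⟩
  have hM0 : (0:ℝ) ≤ M := le_trans (norm_nonneg _) (hMle 0 ⟨le_refl 0, ht⟩)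
  -- pointwise operator bound
  have hkey : ∀ s ∈ Set.Icc (0:ℝ) t, ∀ v : EuclideanSpace ℝ (Fin N),
      ‖E s v‖ ≤ Real.exp ((s - t) * ω) * ‖v‖ := by
    intro s hs v
    have hEeq : E s = Matrix.toEuclideanCLM (𝕜 := ℝ) (exp ((s - t) • A)) := by
      rw [toCLM_exp, _root_.map_smul]
    rw [hEeq]
    exact exp_matrix_norm_le A hA.1 ω (s - t)
      (fun i => hω_min _ (hA.1.eigenvalues_mem_spectrum_real i))
      (by linarith [hs.2]) v
  -- derivative of E
  have hEd : ∀ s : ℝ, HasDerivAt E (E s * B) s := by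
    intro s
    have h1 := hasDerivAt_exp_smul_const (𝕂 := ℝ) B (s - t)
    have h2 : HasDerivAt (fun s : ℝ => s - t) 1 s := (hasDerivAt_id s).sub_const t
    have h3 := HasDerivAt.scomp s h1 h2
    rw [one_smul] at h3
    exact h3
  have hEcont : Continuous E := by
    have : Continuous fun s : ℝ => (s - t) • B :=
      (continuous_id.sub continuous_const).smul continuous_const
    exact continuous_iff_continuousAt.2 fun s => (hEd s).continuousAt
  -- derivative of g
  set g : ℝ → EuclideanSpace ℝ (Fin N) := fun s => E s (ytil s) with hg
  have hgd : ∀ s ∈ Set.Icc (0:ℝ) t, HasDerivAt g (-(ε • (E s (ytil'' s)))) s := by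
    intro s hs
    have h := (hEd s).clm_apply (hd1 s hs)
    have hsum : B (ytil s) + ytil' s = -(ε • ytil'' s) := by
      have h1 := heq s hs
      have h2 : ytil' s = -(B (ytil s)) - ε • ytil'' s := by
        rw [eq_sub_iff_add_eq]; exact h1
      rw [h2]; abel
    have : (E s * B) (ytil s) + E s (ytil' s) = -(ε • (E s (ytil'' s))) := by
      rw [ContinuousLinearMap.mul_apply, ← _root_.map_add, hsum, _root_.map_neg, _root_.map_smul]
    rwa [this] at h
  -- integral identity
  have hcont2 : ContinuousOn (fun s => -(ε • (E s (ytil'' s)))) (Set.Icc (0:ℝ) t) :=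
    ((hEcont.continuousOn.clm_apply hcont).const_smul ε).neg
  have hint : ∫ s in (0:ℝ)..t, -(ε • (E s (ytil'' s))) = g t - g 0 := by
    apply intervalIntegral.integral_eq_sub_of_hasDerivAt
    · intro s hs; exact hgd s (hIcc ▸ hs)
    · exact (hcont2.mono (by rw [hIcc])).intervalIntegrable
  have hgt : g t = ytil t := by
    show E t (ytil t) = ytil t
    rw [hE]
    beta_reduce
    rw [sub_self]
    have h0 : (0:ℝ) • B = 0 := zero_smul ℝ B
    rw [h0, exp_zero, ContinuousLinearMap.one_apply]
  have hg0 : g 0 = exp (-(t • B)) y0 := by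
    show E 0 (ytil 0) = exp (-(t • B)) y0
    rw [hE, hinit0]
    beta_reduce
    rw [zero_sub]
    have h0 : (-t) • B = -(t • B) := neg_smul t B
    rw [h0]
  have hLHS : Matrix.toEuclideanCLM (𝕜 := ℝ) (exp (-(t • A))) y0 - ytil t
      = ∫ s in (0:ℝ)..t, (ε • (E s (ytil'' s))) := by
    have h1 : Matrix.toEuclideanCLM (𝕜 := ℝ) (exp (-(t • A))) = exp (-(t • B)) := by
      rw [toCLM_exp, _root_.map_neg, _root_.map_smul]
    rw [h1, ← hg0, ← hgt]
    rw [← neg_sub (g t) (g 0), ← hint, ← intervalIntegral.integral_neg]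
    simp
  rw [hLHS]
  -- norm bound
  have hb : ‖∫ s in (0:ℝ)..t, (ε • (E s (ytil'' s)))‖ ≤
      |∫ s in (0:ℝ)..t, ε * M * Real.exp ((s - t) * ω)| := by
    apply intervalIntegral.norm_integral_le_abs_of_norm_le
    · rw [Set.uIoc_of_le ht]
      apply (MeasureTheory.ae_restrict_iff' measurableSet_Ioc).mpr
      apply Filter.Eventually.of_forall
      intro s hs
      have hs' : s ∈ Set.Icc (0:ℝ) t := ⟨hs.1.le, hs.2⟩
      rw [norm_smul, Real.norm_eq_abs, abs_of_pos hε]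
      calc ε * ‖E s (ytil'' s)‖ ≤ ε * (Real.exp ((s - t) * ω) * ‖ytil'' s‖) :=
            mul_le_mul_of_nonneg_left (hkey s hs' _) hε.le
        _ ≤ ε * (Real.exp ((s - t) * ω) * M) := by
            apply mul_le_mul_of_nonneg_left _ hε.le
            exact mul_le_mul_of_nonneg_left (hMle s hs') (Real.exp_nonneg _)
        _ = ε * M * Real.exp ((s - t) * ω) := by ring
    · apply Continuous.intervalIntegrable
      continuity
  calc ‖∫ s in (0:ℝ)..t, (ε • (E s (ytil'' s)))‖
      ≤ |∫ s in (0:ℝ)..t, ε * M * Real.exp ((s - t) * ω)| := hb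
    _ = |ε * M * (t * phi (-(ω * t)))| := by
        rw [intervalIntegral.integral_const_mul, integral_exp_eq t ω ht]
    _ = ε * M * (t * phi (-(ω * t))) := by
        apply abs_of_nonneg
        have := phi_nonneg (-(ω * t))
        positivity
    _ = ε * t * phi (-(ω * t)) * M := by ring
end

section
/- Let ε > 0, τ > 0, μ > 0, and set ε̃ = ε/τ and λ = μ/τ. Both roots of (1+2ε̃)ξ² + (2μ - 4ε̃)ξ + (2ε̃ - 1) = 0 have modulus strictly less than 1 if and only if ε > τ²λ/4, i.e., 4ε̃ > μ. -/
/-- With `ε̃ = ε/τ`, `λ = μ/τ` (`ε, τ, μ > 0`), both roots of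
`(1+2ε̃)ξ² + (2μ-4ε̃)ξ + (2ε̃-1) = 0` have modulus `< 1` iff `ε > τ²λ/4`,
i.e. `4ε̃ > μ`. -/
theorem stmt_12 (ε τ μ : ℝ) (hε : 0 < ε) (hτ : 0 < τ) (hμ : 0 < μ) (ξ₁ ξ₂ : ℂ)
    (hroots : ∀ ξ : ℂ, (1 + 2 * ((ε / τ : ℝ) : ℂ)) * ξ ^ 2 +
        (2 * (μ : ℂ) - 4 * ((ε / τ : ℝ) : ℂ)) * ξ + (2 * ((ε / τ : ℝ) : ℂ) - 1) =
      (1 + 2 * ((ε / τ : ℝ) : ℂ)) * (ξ - ξ₁) * (ξ - ξ₂)) :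
    (‖ξ₁‖ < 1 ∧ ‖ξ₂‖ < 1) ↔ ε > τ ^ 2 * (μ / τ) / 4 := by
  set e := ε / τ with he
  have he0 : 0 < e := div_pos hε hτ
  have hA : (0:ℝ) < 1 + 2*e := by linarith
  have h0 := hroots 0
  have h1 := hroots 1
  have hm1 := hroots (-1)
  have hq : ((1+2*e : ℝ) : ℂ) * (ξ₁*ξ₂) = ((2*e-1 : ℝ) : ℂ) := by
    push_cast; linear_combination -h0
  have hs : ((1+2*e : ℝ) : ℂ) * (ξ₁+ξ₂) = ((4*e-2*μ : ℝ) : ℂ) := by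
    push_cast; linear_combination (h1 - hm1)/2
  have hP1 : ((1+2*e : ℝ) : ℂ) * ((1-ξ₁)*(1-ξ₂)) = ((2*μ : ℝ) : ℂ) := by
    push_cast; linear_combination -h1
  have hPm1 : ((1+2*e : ℝ) : ℂ) * ((1+ξ₁)*(1+ξ₂)) = ((8*e-2*μ : ℝ) : ℂ) := by
    push_cast; linear_combination -hm1
  -- translate the RHS of the iff
  have hrhs : (ε > τ ^ 2 * (μ / τ) / 4) ↔ μ < 4*e := by
    rw [show τ ^ 2 * (μ / τ) = τ * μ by field_simp]
    rw [he, gt_iff_lt, div_lt_iff₀ (by norm_num : (0:ℝ) < 4)]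
    rw [show (4:ℝ) * (ε/τ) = (4*ε)/τ by ring, lt_div_iff₀ hτ]
    constructor <;> intro h <;> nlinarith
  rw [hrhs]
  -- imaginary part bookkeeping
  have hi2 : ξ₂.im = -ξ₁.im := by
    have h := congrArg Complex.im hs
    simp [Complex.mul_im] at h
    rcases h with h | h
    · linarith
    · linarith
  have hcase : ξ₁.im = 0 ∨ ξ₂.re = ξ₁.re := by
    have h := congrArg Complex.im hq
    simp [Complex.mul_im, Complex.mul_re] at h
    rcases h with h | h
    · exfalso; linarith
    · have : ξ₁.im * (ξ₂.re - ξ₁.re) = 0 := by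
        rw [hi2] at h; ring_nf; ring_nf at h; linarith
      rcases mul_eq_zero.mp this with h' | h'
      · exact Or.inl h'
      · exact Or.inr (by linarith)
  rcases hcase with him | hre
  · -- both roots real
    have hx1 : ξ₁ = ((ξ₁.re : ℝ) : ℂ) := Complex.ext (by simp) (by simp [him])
    have hx2 : ξ₂ = ((ξ₂.re : ℝ) : ℂ) := Complex.ext (by simp) (by simp [hi2, him])
    set x₁ := ξ₁.re
    set x₂ := ξ₂.re
    rw [hx1, hx2] at hq hP1 hPm1 ⊢
    rw [Complex.norm_real, Complex.norm_real, Real.norm_eq_abs, Real.norm_eq_abs]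
    have hq' : (1+2*e) * (x₁*x₂) = 2*e-1 := by exact_mod_cast hq
    have hP1' : (1+2*e) * ((1-x₁)*(1-x₂)) = 2*μ := by exact_mod_cast hP1
    have hPm1' : (1+2*e) * ((1+x₁)*(1+x₂)) = 8*e-2*μ := by exact_mod_cast hPm1
    constructor
    · rintro ⟨ha1, ha2⟩
      rw [abs_lt] at ha1 ha2
      have hpos : 0 < (1+2*e) * ((1+x₁)*(1+x₂)) :=
        mul_pos hA (mul_pos (by linarith) (by linarith))
      linarith [hPm1' ▸ hpos]
    · intro h
      have G1 : 0 < (1-x₁)*(1-x₂) := by nlinarith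
      have G2 : 0 < (1+x₁)*(1+x₂) := by nlinarith
      have G3 : x₁*x₂ < 1 := by nlinarith
      have hlin1 : x₁ + x₂ < 2 := by nlinarith
      have hlin2 : -2 < x₁ + x₂ := by nlinarith
      constructor <;> rw [abs_lt] <;> constructor
      · by_contra hc; push_neg at hc
        have : x₂ > -1 := by linarith
        nlinarith
      · by_contra hc; push_neg at hc
        have : x₂ < 1 := by linarith
        nlinarith
      · by_contra hc; push_neg at hc
        have : x₁ > -1 := by linarith
        nlinarith
      · by_contra hc; push_neg at hc
        have : x₁ < 1 := by linarith
        nlinarith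
  · -- conjugate pair
    have hconj : ξ₂ = (starRingEnd ℂ) ξ₁ := Complex.ext (by simpa using hre) (by simpa using hi2)
    rw [hconj, Complex.norm_conj, and_self]
    rw [hconj, Complex.mul_conj] at hq
    rw [hconj, show ((1:ℂ) + (starRingEnd ℂ) ξ₁) = (starRingEnd ℂ) (1 + ξ₁) by simp,
      Complex.mul_conj] at hPm1
    have hqn : (1+2*e) * Complex.normSq ξ₁ = 2*e-1 := by exact_mod_cast hq
    have hPm1n : (1+2*e) * Complex.normSq (1+ξ₁) = 8*e-2*μ := by exact_mod_cast hPm1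
    constructor
    · intro h
      have hne : (1:ℂ) + ξ₁ ≠ 0 := by
        intro h0
        have : ξ₁ = -1 := by linear_combination h0
        rw [this] at h; simp at h
      have hpos : 0 < Complex.normSq (1+ξ₁) := Complex.normSq_pos.mpr hne
      nlinarith
    · intro h
      have hlt : Complex.normSq ξ₁ < 1 := by nlinarith
      have hsq := Complex.sq_norm ξ₁
      nlinarith [norm_nonneg ξ₁]
end

section
/- Let A be a symmetric positive definite real N×N matrix with largest eigenvalue λ_max, and let S be the 2N×2N HM amplification matrix with blocks [(4ε̃/(1+2ε̃))I - (2τ/(1+2ε̃))A, ((1-2ε̃)/(1+2ε̃))I; I, 0] with ε̃ = ε/τ, ε, τ > 0. Then every eigenvalue of S has modulus strictly less than 1 if and only if ε > τ² λ_max / 4. -/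
open Matrix Complex

/-- Schur–Cohn: any root of `ξ² - sξ - b` lies strictly inside the unit disc
when `|b| < 1` and `|s| < 1 - b`. -/
lemma schur_aux (s b : ℝ) (hb : |b| < 1) (hs : |s| < 1 - b) (ξ : ℂ)
    (hξ : ξ ^ 2 - (s : ℂ) * ξ - (b : ℂ) = 0) : ‖ξ‖ < 1 := by
  obtain ⟨hb1, hb2⟩ := abs_lt.mp hb
  obtain ⟨hs1, hs2⟩ := abs_lt.mp hs
  set x := ξ.re with hx
  set y := ξ.im with hy
  have hre : x ^ 2 - y ^ 2 - s * x - b = 0 := by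
    have := congrArg Complex.re hξ
    simp [pow_two, Complex.mul_re, Complex.mul_im, ← hx, ← hy] at this
    linarith [this]
  have him : y * (2 * x - s) = 0 := by
    have := congrArg Complex.im hξ
    simp [pow_two, Complex.mul_re, Complex.mul_im, ← hx, ← hy] at this
    nlinarith [this]
  have habs : ‖ξ‖ ^ 2 = x ^ 2 + y ^ 2 := by
    rw [Complex.sq_norm, Complex.normSq_apply, ← hx, ← hy]; ring
  rcases mul_eq_zero.mp him with hy0 | hxs
  · have hx2 : x ^ 2 - s * x - b = 0 := by nlinarith
    have h1 : x < 1 := by nlinarith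
    have h2 : -1 < x := by nlinarith
    nlinarith [norm_nonneg ξ]
  · have hx2 : x = s / 2 := by linarith
    have : ‖ξ‖ ^ 2 = -b := by rw [habs]; nlinarith
    nlinarith [norm_nonneg ξ]

/-- Existence of a real root `≤ -1` of `ξ² - sξ - b` when `s ≤ b - 1` and `|b| < 1`. -/
lemma quad_root (s b : ℝ) (hb1 : -1 < b) (hb2 : b < 1) (hs : s ≤ b - 1) :
    ∃ r : ℝ, r ≤ -1 ∧ r ^ 2 - s * r - b = 0 := by
  have hΔ : (0:ℝ) ≤ s ^ 2 + 4 * b := by nlinarith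
  have hsq : Real.sqrt (s ^ 2 + 4 * b) ^ 2 = s ^ 2 + 4 * b := Real.sq_sqrt hΔ
  have hge : b + 1 ≤ Real.sqrt (s ^ 2 + 4 * b) := by
    have h1 : Real.sqrt ((b + 1) ^ 2) ≤ Real.sqrt (s ^ 2 + 4 * b) :=
      Real.sqrt_le_sqrt (by nlinarith)
    rwa [Real.sqrt_sq (by linarith)] at h1
  refine ⟨(s - Real.sqrt (s ^ 2 + 4 * b)) / 2, by nlinarith, by nlinarith⟩

lemma det_affine {N : ℕ} {A : Matrix (Fin N) (Fin N) ℝ} (hA : A.IsHermitian) (x y : ℂ) :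
    (x • A.map (Complex.ofReal) + y • (1 : Matrix (Fin N) (Fin N) ℂ)).det
      = ∏ i, (x * (hA.eigenvalues i : ℂ) + y) := by
  have map_mul_ofReal : ∀ M P : Matrix (Fin N) (Fin N) ℝ,
      (M * P).map Complex.ofReal = M.map Complex.ofReal * P.map Complex.ofReal := by
    intro M P
    have : (Complex.ofReal : ℝ → ℂ) = ⇑Complex.ofRealHom := rfl
    rw [this, Matrix.map_mul]
  have hU : (hA.eigenvectorUnitary : Matrix (Fin N) (Fin N) ℝ)
      * star (hA.eigenvectorUnitary : Matrix (Fin N) (Fin N) ℝ) = 1 :=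
    Matrix.mem_unitaryGroup_iff.mp hA.eigenvectorUnitary.2
  set U' : Matrix (Fin N) (Fin N) ℂ :=
    (hA.eigenvectorUnitary : Matrix (Fin N) (Fin N) ℝ).map Complex.ofReal with hU'def
  have hstar : (star (hA.eigenvectorUnitary : Matrix (Fin N) (Fin N) ℝ)).map Complex.ofReal
      = star U' := by
    ext i j
    simp [hU'def, Matrix.map_apply, Matrix.conjTranspose_apply, Complex.conj_ofReal]
  have hU' : U' * star U' = 1 := by
    have h := congrArg (fun M => M.map Complex.ofReal) hU
    simp only [map_mul_ofReal, hstar] at h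
    rw [h]
    ext i j
    by_cases hij : i = j <;> simp [Matrix.one_apply, hij, Matrix.map_apply]
  have hA' : A.map Complex.ofReal
      = U' * Matrix.diagonal (fun i => (hA.eigenvalues i : ℂ)) * star U' := by
    have h := congrArg (fun M => M.map Complex.ofReal) hA.spectral_theorem
    simp only [Unitary.conjStarAlgAut_apply, map_mul_ofReal, hstar] at h
    rw [h]
    congr 2
    ext i j
    by_cases hij : i = j <;> simp [Matrix.diagonal_apply, hij, Matrix.map_apply, RCLike.ofReal]
  have key : x • A.map Complex.ofReal + y • (1 : Matrix (Fin N) (Fin N) ℂ)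
      = U' * (Matrix.diagonal (fun i => x * (hA.eigenvalues i : ℂ) + y)) * star U' := by
    have hdiag : Matrix.diagonal (fun i => x * (hA.eigenvalues i : ℂ) + y)
        = x • Matrix.diagonal (fun i => (hA.eigenvalues i : ℂ))
          + y • (1 : Matrix (Fin N) (Fin N) ℂ) := by
      ext i j
      by_cases h : i = j <;> simp [Matrix.diagonal_apply, Matrix.one_apply, h, smul_eq_mul]
    rw [hdiag, Matrix.mul_add, Matrix.add_mul, hA']
    rw [Matrix.mul_smul, Matrix.smul_mul, Matrix.mul_smul, Matrix.smul_mul, Matrix.mul_one, hU']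
  rw [key, Matrix.det_mul, Matrix.det_mul, mul_right_comm, ← Matrix.det_mul, hU',
    Matrix.det_one, one_mul, Matrix.det_diagonal]

lemma spec_iff {N : ℕ} {A : Matrix (Fin N) (Fin N) ℝ} (hA : A.IsHermitian)
    (a b c : ℝ) (ξ : ℂ) :
    ξ ∈ spectrum ℂ ((Matrix.fromBlocks
        (a • (1 : Matrix (Fin N) (Fin N) ℝ) - c • A)
        (b • (1 : Matrix (Fin N) (Fin N) ℝ))
        (1 : Matrix (Fin N) (Fin N) ℝ) (0 : Matrix (Fin N) (Fin N) ℝ)).map Complex.ofReal)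
      ↔ ∃ i, ξ ^ 2 - ((a : ℂ) - (c : ℂ) * (hA.eigenvalues i : ℂ)) * ξ - (b : ℂ) = 0 := by
  set A' : Matrix (Fin N) (Fin N) ℂ := A.map Complex.ofReal with hA'def
  set P' : Matrix (Fin N) (Fin N) ℂ := (a : ℂ) • 1 - (c : ℂ) • A' with hP'def
  set Q' : Matrix (Fin N) (Fin N) ℂ := (b : ℂ) • 1 with hQ'def
  have h11 : (a • (1 : Matrix (Fin N) (Fin N) ℝ) - c • A).map Complex.ofReal = P' := by
    ext i j
    by_cases h : i = j
    · simp [Matrix.map_apply, Matrix.one_apply, h, hP'def, hA'def]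
    · simp [Matrix.map_apply, Matrix.one_apply, h, hP'def, hA'def]
  have h12 : (b • (1 : Matrix (Fin N) (Fin N) ℝ)).map Complex.ofReal = Q' := by
    ext i j
    by_cases h : i = j <;> simp [Matrix.map_apply, Matrix.one_apply, h, hQ'def]
  have h21 : (1 : Matrix (Fin N) (Fin N) ℝ).map Complex.ofReal = 1 := by
    ext i j
    by_cases h : i = j <;> simp [Matrix.map_apply, Matrix.one_apply, h]
  have h22 : (0 : Matrix (Fin N) (Fin N) ℝ).map Complex.ofReal = 0 := by
    ext i j
    simp [Matrix.map_apply]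
  rw [Matrix.fromBlocks_map, h11, h12, h21, h22, spectrum.mem_iff]
  have hres : (algebraMap ℂ (Matrix (Fin N ⊕ Fin N) (Fin N ⊕ Fin N) ℂ)) ξ
        - Matrix.fromBlocks P' Q' 1 0
      = Matrix.fromBlocks (ξ • 1 - P') (-Q') (-1) (ξ • 1) := by
    rw [Algebra.algebraMap_eq_smul_one, ← Matrix.fromBlocks_one, Matrix.fromBlocks_smul,
      sub_eq_add_neg, Matrix.fromBlocks_neg, Matrix.fromBlocks_add]
    simp [sub_eq_add_neg]
  rw [hres]
  set J : Matrix (Fin N ⊕ Fin N) (Fin N ⊕ Fin N) ℂ := Matrix.fromBlocks 0 1 1 0 with hJdef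
  have hJ : J * J = 1 := by
    rw [hJdef, Matrix.fromBlocks_multiply]
    simp [Matrix.fromBlocks_one]
  have hJunit : IsUnit J := ⟨⟨J, J, hJ, hJ⟩, rfl⟩
  have hiff : ∀ X : Matrix (Fin N ⊕ Fin N) (Fin N ⊕ Fin N) ℂ, IsUnit (J * X) ↔ IsUnit X := by
    intro X
    constructor
    · intro h
      have := hJunit.mul h
      rwa [← mul_assoc, hJ, one_mul] at this
    · exact fun h => hJunit.mul h
  rw [← hiff]
  have hJM : J * Matrix.fromBlocks (ξ • 1 - P') (-Q') (-1) (ξ • 1)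
      = Matrix.fromBlocks (-1) (ξ • 1) (ξ • 1 - P') (-Q') := by
    rw [hJdef, Matrix.fromBlocks_multiply]
    simp
  rw [hJM]
  haveI : Invertible (-1 : Matrix (Fin N) (Fin N) ℂ) := ⟨-1, by simp, by simp⟩
  have hinv : ⅟(-1 : Matrix (Fin N) (Fin N) ℂ) = -1 := invOf_eq_right_inv (by simp)
  rw [Matrix.isUnit_iff_isUnit_det, Matrix.det_fromBlocks₁₁, hinv]
  have hmid : -Q' - (ξ • 1 - P') * -1 * (ξ • (1 : Matrix (Fin N) (Fin N) ℂ))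
      = ((c : ℂ) * ξ) • A' + (ξ ^ 2 - (a : ℂ) * ξ - (b : ℂ)) • (1 : Matrix (Fin N) (Fin N) ℂ) := by
    rw [hP'def, hQ'def]
    simp only [Matrix.mul_neg, Matrix.neg_mul, sub_neg_eq_add, Matrix.sub_mul, Matrix.smul_mul,
      Matrix.mul_smul, Matrix.one_mul, Matrix.mul_one, smul_smul]
    module
  rw [hmid, det_affine hA]
  rw [isUnit_iff_ne_zero, not_not, mul_eq_zero]
  have hdetneg : ((-1 : Matrix (Fin N) (Fin N) ℂ).det) ≠ 0 := by
    rw [Matrix.det_neg, Matrix.det_one]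
    simp
  simp only [hdetneg, false_or]
  rw [Finset.prod_eq_zero_iff]
  constructor
  · rintro ⟨i, -, hi⟩
    exact ⟨i, by linear_combination hi⟩
  · rintro ⟨i, hi⟩
    exact ⟨i, Finset.mem_univ i, by linear_combination hi⟩

lemma eig_surj {N : ℕ} {A : Matrix (Fin N) (Fin N) ℝ} (hA : A.IsHermitian) {μ : ℝ}
    (h : μ ∈ spectrum ℝ A) : ∃ i, hA.eigenvalues i = μ := by
  rw [spectrum.mem_iff] at h
  by_contra hc
  push_neg at hc
  apply h
  have hmap : ((algebraMap ℝ (Matrix (Fin N) (Fin N) ℝ)) μ - A).map Complex.ofReal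
      = (-1 : ℂ) • A.map Complex.ofReal + (μ : ℂ) • (1 : Matrix (Fin N) (Fin N) ℂ) := by
    rw [Algebra.algebraMap_eq_smul_one]
    ext i j
    by_cases hij : i = j <;> simp [Matrix.map_apply, Matrix.one_apply, hij] <;> ring
  have hdet : (((algebraMap ℝ (Matrix (Fin N) (Fin N) ℝ)) μ - A).map Complex.ofReal).det
      = ∏ i, ((-1 : ℂ) * (hA.eigenvalues i : ℂ) + (μ : ℂ)) := by
    rw [hmap, det_affine hA]
  rw [Matrix.isUnit_iff_isUnit_det, isUnit_iff_ne_zero]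
  intro h0
  have : (((algebraMap ℝ (Matrix (Fin N) (Fin N) ℝ)) μ - A).map Complex.ofReal).det = 0 := by
    have hd : (Complex.ofReal : ℝ → ℂ) = ⇑Complex.ofRealHom := rfl
    rw [hd, ← RingHom.mapMatrix_apply, ← RingHom.map_det, h0]
    simp
  rw [hdet, Finset.prod_eq_zero_iff] at this
  obtain ⟨i, -, hi⟩ := this
  apply hc i
  have : ((hA.eigenvalues i : ℂ)) = (μ : ℂ) := by linear_combination -hi
  exact_mod_cast this

/-- For a symmetric positive definite `A` with largest eigenvalue `λ_max`, all eigenvalues of the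
HM amplification matrix
`S = [(4ε̃/(1+2ε̃))I - (2τ/(1+2ε̃))A, ((1-2ε̃)/(1+2ε̃))I; I, 0]` (with `ε̃ = ε/τ`)
have modulus `< 1` iff `ε > τ² λ_max / 4`. -/
theorem stmt_13 (N : ℕ) (A : Matrix (Fin N) (Fin N) ℝ) (hA : A.PosDef)
    (lmax : ℝ) (hmem : lmax ∈ spectrum ℝ A) (hmax : ∀ μ ∈ spectrum ℝ A, μ ≤ lmax)
    (ε τ : ℝ) (hε : 0 < ε) (hτ : 0 < τ) :
    (∀ ξ ∈ spectrum ℂ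
        ((Matrix.fromBlocks
            ((4 * (ε / τ) / (1 + 2 * (ε / τ))) • (1 : Matrix (Fin N) (Fin N) ℝ) -
              (2 * τ / (1 + 2 * (ε / τ))) • A)
            (((1 - 2 * (ε / τ)) / (1 + 2 * (ε / τ))) • (1 : Matrix (Fin N) (Fin N) ℝ))
            (1 : Matrix (Fin N) (Fin N) ℝ) (0 : Matrix (Fin N) (Fin N) ℝ)).map
          (Complex.ofReal)),
        ‖ξ‖ < 1) ↔ ε > τ ^ 2 * lmax / 4 := by
  have he : 0 < ε / τ := div_pos hε hτ
  have hd : (0:ℝ) < 1 + 2 * (ε / τ) := by linarith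
  set a : ℝ := 4 * (ε / τ) / (1 + 2 * (ε / τ)) with ha_def
  set b : ℝ := (1 - 2 * (ε / τ)) / (1 + 2 * (ε / τ)) with hb_def
  set c : ℝ := 2 * τ / (1 + 2 * (ε / τ)) with hc_def
  have ha : 0 < a := div_pos (by linarith) hd
  have hc : 0 < c := div_pos (by linarith) hd
  have hb1 : -1 < b := by
    rw [hb_def, lt_div_iff₀ hd]
    linarith
  have hb2 : b < 1 := by
    rw [hb_def, div_lt_one hd]
    linarith
  have hab : a + b = 1 := by
    rw [ha_def, hb_def, ← add_div, div_eq_one_iff_eq hd.ne']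
    ring
  have hchar := spec_iff (N := N) (A := A) hA.1 a b c
  constructor
  · intro hall
    by_contra hcon
    push_neg at hcon
    obtain ⟨i0, hi0⟩ := eig_surj hA.1 hmem
    have hs : a - c * lmax ≤ b - 1 := by
      have h8 : 8 * (ε / τ) ≤ 2 * τ * lmax := by
        have h9 : 8 * (ε / τ) = 8 * ε / τ := by ring
        rw [h9, div_le_iff₀ hτ]
        nlinarith
      have e1 : a - c * lmax = (4 * (ε / τ) - 2 * τ * lmax) / (1 + 2 * (ε / τ)) := by
        rw [ha_def, hc_def]; ring
      have e2 : b - 1 = (-(4 * (ε / τ))) / (1 + 2 * (ε / τ)) := by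
        rw [hb_def, div_sub' hd.ne']
        ring_nf
      rw [e1, e2, div_le_div_iff₀ hd hd]
      nlinarith
    obtain ⟨r, hr1, hr2⟩ := quad_root (a - c * lmax) b hb1 hb2 hs
    have hmemS : (r : ℂ) ∈ spectrum ℂ _ := (hchar (r : ℂ)).mpr ⟨i0, by
      rw [hi0]
      exact_mod_cast congrArg (Complex.ofReal) hr2⟩
    have := hall (r : ℂ) hmemS
    rw [Complex.norm_real, Real.norm_eq_abs] at this
    have : -r < 1 := by linarith [neg_abs_le r]
    linarith
  · intro hgt ξ hξ
    obtain ⟨i, hroot⟩ := (hchar ξ).mp hξ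
    have hpos : 0 < hA.1.eigenvalues i := hA.eigenvalues_pos i
    have hle : hA.1.eigenvalues i ≤ lmax :=
      hmax _ (hA.1.eigenvalues_mem_spectrum_real i)
    have hclt : c * hA.1.eigenvalues i < 2 * a := by
      have h1 : c * hA.1.eigenvalues i ≤ c * lmax :=
        mul_le_mul_of_nonneg_left hle hc.le
      have h2 : c * lmax < 2 * a := by
        have e1 : c * lmax = (2 * τ * lmax) / (1 + 2 * (ε / τ)) := by
          rw [hc_def]; ring
        have e2 : 2 * a = (8 * (ε / τ)) / (1 + 2 * (ε / τ)) := by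
          rw [ha_def]; ring
        rw [e1, e2, div_lt_div_iff₀ hd hd]
        have : τ * lmax < 4 * (ε / τ) := by
          have h9 : 4 * (ε / τ) = 4 * ε / τ := by ring
          rw [h9, lt_div_iff₀ hτ]
          nlinarith
        nlinarith
      linarith
    have hsabs : |a - c * hA.1.eigenvalues i| < 1 - b := by
      rw [abs_lt]
      constructor
      · nlinarith [mul_pos hc hpos]
      · nlinarith [mul_pos hc hpos]
    refine schur_aux (a - c * hA.1.eigenvalues i) b (abs_lt.mpr ⟨hb1, hb2⟩) hsabs ξ ?_
    push_cast
    exact hroot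
end

section
/- If μ² + 1 - 4ε̃μ = 0 with ε̃ > 0, μ > 0, then the 2×2 matrix S = [[(4ε̃-2μ)/(1+2ε̃), (1-2ε̃)/(1+2ε̃)], [1, 0]] has a double eigenvalue and is not diagonalizable. -/
open Polynomial

/-- If `μ² + 1 - 4ε̃μ = 0` (`ε̃ > 0`, `μ > 0`), the HM block
`S = [[(4ε̃-2μ)/(1+2ε̃), (1-2ε̃)/(1+2ε̃)], [1, 0]]` has a double eigenvalue and is not
diagonalizable (over `ℂ`). -/
theorem stmt_16 (e μ : ℝ) (he : 0 < e) (hμ : 0 < μ) (hcrit : μ ^ 2 + 1 - 4 * e * μ = 0) :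
    (∃ ξ : ℂ,
      (Matrix.charpoly
        ((!![(4 * e - 2 * μ) / (1 + 2 * e), (1 - 2 * e) / (1 + 2 * e); 1, 0] :
            Matrix (Fin 2) (Fin 2) ℝ).map Complex.ofReal)) = (X - C ξ) ^ 2) ∧
    ¬ ∃ (P : Matrix (Fin 2) (Fin 2) ℂ) (d : Fin 2 → ℂ), IsUnit P ∧
        P⁻¹ *
          ((!![(4 * e - 2 * μ) / (1 + 2 * e), (1 - 2 * e) / (1 + 2 * e); 1, 0] :
              Matrix (Fin 2) (Fin 2) ℝ).map Complex.ofReal) * P =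
        Matrix.diagonal d := by
  have hden : (1 + 2 * e) ≠ 0 := by positivity
  set a : ℝ := (4 * e - 2 * μ) / (1 + 2 * e) with ha
  set b : ℝ := (1 - 2 * e) / (1 + 2 * e) with hb
  set ξ : ℂ := Complex.ofReal (a / 2) with hξ
  have hb' : b = -((a / 2) ^ 2) := by
    rw [ha, hb]
    field_simp
    nlinarith [hcrit]
  set S : Matrix (Fin 2) (Fin 2) ℂ :=
    (!![a, b; 1, 0] : Matrix (Fin 2) (Fin 2) ℝ).map Complex.ofReal with hS
  have hSentries : S = !![(a : ℂ), (b : ℂ); 1, 0] := by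
    ext i j
    fin_cases i <;> fin_cases j <;> simp [hS]
  have hchar : S.charpoly = (X - C ξ) ^ 2 := by
    rw [Matrix.charpoly, Matrix.det_fin_two]
    rw [Matrix.charmatrix_apply_eq, Matrix.charmatrix_apply_eq,
      Matrix.charmatrix_apply_ne _ _ _ (by decide), Matrix.charmatrix_apply_ne _ _ _ (by decide)]
    have h00 : S 0 0 = (a : ℂ) := by rw [hSentries]; simp
    have h01 : S 0 1 = (b : ℂ) := by rw [hSentries]; simp
    have h10 : S 1 0 = (1 : ℂ) := by rw [hSentries]; simp
    have h11 : S 1 1 = (0 : ℂ) := by rw [hSentries]; simp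
    rw [h00, h01, h10, h11]
    have hba : (b : ℂ) = -(ξ ^ 2) := by
      rw [hξ, hb']; push_cast; ring
    have haa : (a : ℂ) = 2 * ξ := by
      rw [hξ]; push_cast; ring
    rw [hba, haa]
    simp only [map_neg, map_pow, map_mul, map_ofNat, map_zero, map_one]
    ring
  refine ⟨⟨ξ, hchar⟩, ?_⟩
  rintro ⟨P, d, hP, heq⟩
  have hPdet : IsUnit P.det := (Matrix.isUnit_iff_isUnit_det P).mp hP
  have hPinv : P * P⁻¹ = 1 := Matrix.mul_nonsing_inv P hPdet
  have hPinv' : P⁻¹ * P = 1 := Matrix.nonsing_inv_mul P hPdet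
  -- N² = 0 from Cayley–Hamilton
  set N : Matrix (Fin 2) (Fin 2) ℂ := S - ξ • 1 with hN
  have hN2 : N ^ 2 = 0 := by
    have h2 := Matrix.aeval_self_charpoly S
    rw [hchar] at h2
    simpa [hN, map_pow, map_sub, aeval_X, aeval_C, Algebra.algebraMap_eq_smul_one] using h2
  -- conjugate
  have hconj : P⁻¹ * N * P = Matrix.diagonal d - ξ • 1 := by
    rw [hN, Matrix.mul_sub, Matrix.sub_mul, heq]
    congr 1
    rw [Matrix.mul_smul, Matrix.mul_one, Matrix.smul_mul, hPinv']
  have hDiag2 : (Matrix.diagonal d - ξ • 1) ^ 2 = 0 := by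
    rw [← hconj]
    calc (P⁻¹ * N * P) ^ 2 = P⁻¹ * (N * (P * P⁻¹) * N) * P := by
          simp [pow_two, Matrix.mul_assoc]
      _ = P⁻¹ * N ^ 2 * P := by rw [hPinv]; simp [pow_two, Matrix.mul_assoc]
      _ = 0 := by rw [hN2]; simp
  have hdall : ∀ i, d i = ξ := by
    intro i
    have hdiag : Matrix.diagonal d - ξ • 1 = Matrix.diagonal (fun j => d j - ξ) := by
      ext i j
      by_cases h : i = j <;> simp [h, Matrix.diagonal_apply, Matrix.one_apply]
    rw [hdiag, pow_two, Matrix.diagonal_mul_diagonal] at hDiag2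
    have h := congrFun (congrFun hDiag2 i) i
    rw [Matrix.diagonal_apply_eq, Matrix.zero_apply] at h
    exact sub_eq_zero.mp (mul_self_eq_zero.mp h)
  have hDξ : Matrix.diagonal d = ξ • (1 : Matrix (Fin 2) (Fin 2) ℂ) := by
    ext i j
    by_cases h : i = j <;> simp [h, Matrix.diagonal_apply, Matrix.one_apply, hdall]
  have hSP : S * P = ξ • P := by
    have h := congrArg (fun M => P * M) heq
    rw [← Matrix.mul_assoc, ← Matrix.mul_assoc, hPinv, Matrix.one_mul] at h
    rw [h, hDξ, Matrix.mul_smul, Matrix.mul_one]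
  have hSξ : S = ξ • (1 : Matrix (Fin 2) (Fin 2) ℂ) := by
    have h := congrArg (fun M => M * P⁻¹) hSP
    rw [Matrix.mul_assoc, hPinv, Matrix.mul_one, Matrix.smul_mul, hPinv] at h
    exact h
  have h10 : S 1 0 = (1 : ℂ) := by rw [hSentries]; simp
  rw [hSξ] at h10
  simp [Matrix.smul_apply, Matrix.one_apply] at h10
end

section
/- If the Samarskii condition κ > λ_max/4 holds with ε = κτ², where κ > 0 and λ_max is the largest eigenvalue of the symmetric positive definite matrix A, then for every τ > 0 all eigenvalues of the HM amplification matrix S have modulus less than 1 (unconditional stability in τ). -/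
lemma quad_root_abs_lt_one {p c : ℝ} (ξ : ℂ) (hquad : ξ^2 = (p:ℂ)*ξ + (c:ℂ))
    (hc1 : -1 < c) (hc2 : c < 1) (hp1 : -(1-c) < p) (hp2 : p < 1 - c) :
    ‖ξ‖ < 1 := by
  by_cases him : ξ.im = 0
  · have hξ : ξ = (ξ.re : ℂ) := Complex.ext rfl (by simp [him])
    set x := ξ.re with hxdef
    have hx : x^2 = p*x + c := by
      have h := hquad
      rw [hξ] at h
      exact_mod_cast h
    rw [hξ, Complex.norm_real, Real.norm_eq_abs, abs_lt]
    constructor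
    · by_contra h
      push_neg at h
      nlinarith [mul_nonneg (by linarith : (0:ℝ) ≤ -(x+1)) (by linarith : (0:ℝ) ≤ -(x-1-p))]
    · by_contra h
      push_neg at h
      nlinarith [mul_nonneg (by linarith : (0:ℝ) ≤ x-1) (by linarith : (0:ℝ) ≤ x+1-p)]
  · have hconj : (starRingEnd ℂ ξ)^2 = (p:ℂ) * starRingEnd ℂ ξ + c := by
      have h := congrArg (starRingEnd ℂ) hquad
      simpa using h
    have hne : ξ - starRingEnd ℂ ξ ≠ 0 := by
      rw [Complex.sub_conj]
      simp [Complex.ext_iff, him]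
    have hsum : ξ + starRingEnd ℂ ξ = (p:ℂ) := by
      have h0 : (ξ - starRingEnd ℂ ξ) * (ξ + starRingEnd ℂ ξ - p) = 0 := by
        linear_combination hquad - hconj
      rcases mul_eq_zero.1 h0 with h|h
      · exact absurd h hne
      · exact sub_eq_zero.1 h
    have hns : (Complex.normSq ξ : ℂ) = ((-c : ℝ) : ℂ) := by
      rw [← Complex.mul_conj]
      push_cast
      linear_combination ξ * hsum - hquad
    have hns' : Complex.normSq ξ = -c := by exact_mod_cast hns
    have hsq := Complex.sq_norm ξ
    nlinarith [norm_nonneg ξ]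

lemma spec_complex_real {N : ℕ} (A : Matrix (Fin N) (Fin N) ℝ) (hsymm : A.IsHermitian)
    {μ : ℂ} (hμ : μ ∈ spectrum ℂ (A.map Complex.ofReal)) :
    ∃ t : ℝ, t ∈ spectrum ℝ A ∧ μ = (t : ℂ) := by
  have hH : (A.map Complex.ofReal).IsHermitian := by
    ext i j
    have hAt : A j i = A i j := by
      conv_lhs => rw [← hsymm]
      simp [Matrix.conjTranspose_apply]
    simp [Matrix.conjTranspose_apply, Matrix.map_apply, Complex.conj_ofReal, hAt]
  have hμ0 := hμ
  rw [hH.spectral_theorem, AlgEquiv.spectrum_eq,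
    spectrum_diagonal] at hμ
  obtain ⟨i, hi⟩ := hμ
  have hμt : μ = ((hH.eigenvalues i : ℝ) : ℂ) := by
    rw [← hi]; norm_num
  refine ⟨hH.eigenvalues i, ?_, hμt⟩
  have hdetC : (((hH.eigenvalues i : ℝ) : ℂ) • 1 - A.map Complex.ofReal).det = 0 := by
    have h := hμ0
    rw [spectrum.mem_iff, Algebra.algebraMap_eq_smul_one, Matrix.isUnit_iff_isUnit_det,
      isUnit_iff_ne_zero, not_not] at h
    rw [← hμt]; exact h
  have hmap : (((hH.eigenvalues i : ℝ) • 1 - A).map Complex.ofReal)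
      = ((hH.eigenvalues i : ℝ) : ℂ) • 1 - A.map Complex.ofReal := by
    ext k l
    simp [Matrix.map_apply, Matrix.sub_apply, Matrix.smul_apply, Matrix.one_apply,
      apply_ite Complex.ofReal]
  have hdetR : ((hH.eigenvalues i : ℝ) • 1 - A).det = 0 := by
    have hdm := RingHom.map_det Complex.ofRealHom ((hH.eigenvalues i : ℝ) • 1 - A)
    rw [RingHom.mapMatrix_apply] at hdm
    rw [show ((hH.eigenvalues i : ℝ) • 1 - A).map ⇑Complex.ofRealHom
        = ((hH.eigenvalues i : ℝ) • 1 - A).map Complex.ofReal from rfl, hmap, hdetC] at hdm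
    rw [Complex.ofRealHom_eq_coe] at hdm
    exact_mod_cast hdm
  rw [spectrum.mem_iff, Algebra.algebraMap_eq_smul_one, Matrix.isUnit_iff_isUnit_det,
    isUnit_iff_ne_zero, not_not]
  exact hdetR

/-- Samarskii's condition `κ > λ_max/4` with `ε = κτ²` implies that, for every `τ > 0`, all
eigenvalues of the HM amplification matrix `S` have modulus less than one. -/
theorem stmt_18 (N : ℕ) (A : Matrix (Fin N) (Fin N) ℝ) (hA : A.PosDef)
    (lmax : ℝ) (hmem : lmax ∈ spectrum ℝ A) (hmax : ∀ μ ∈ spectrum ℝ A, μ ≤ lmax)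
    (κ : ℝ) (hκ : κ > lmax / 4) :
    ∀ τ > (0 : ℝ), ∀ ξ ∈ spectrum ℂ
        ((Matrix.fromBlocks
            ((4 * (κ * τ) / (1 + 2 * (κ * τ))) • (1 : Matrix (Fin N) (Fin N) ℝ) -
              (2 * τ / (1 + 2 * (κ * τ))) • A)
            (((1 - 2 * (κ * τ)) / (1 + 2 * (κ * τ))) • (1 : Matrix (Fin N) (Fin N) ℝ))
            (1 : Matrix (Fin N) (Fin N) ℝ) (0 : Matrix (Fin N) (Fin N) ℝ)).map
          Complex.ofReal),
      ‖ξ‖ < 1 := by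
  intro τ hτ ξ hξS
  by_cases hξ0 : ξ = 0
  · simp [hξ0]
  -- positivity of the real spectrum
  have hposspec : ∀ t ∈ spectrum ℝ A, 0 < t := by
    intro t ht
    rw [hA.1.spectrum_real_eq_range_eigenvalues] at ht
    obtain ⟨i, rfl⟩ := ht
    exact hA.eigenvalues_pos i
  have hlmax0 : 0 < lmax := hposspec lmax hmem
  have hκ0 : 0 < κ := by linarith
  have hκτ : 0 < κ * τ := mul_pos hκ0 hτ
  have hd : (0:ℝ) < 1 + 2 * (κ * τ) := by linarith
  set a : ℝ := 4 * (κ * τ) / (1 + 2 * (κ * τ)) with ha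
  set b : ℝ := 2 * τ / (1 + 2 * (κ * τ)) with hb
  set c : ℝ := (1 - 2 * (κ * τ)) / (1 + 2 * (κ * τ)) with hc
  have hb0R : (0:ℝ) < b := by rw [hb]; positivity
  have hbC : (b:ℂ) ≠ 0 := by
    exact_mod_cast ne_of_gt hb0R
  -- determinant condition
  rw [spectrum.mem_iff, Algebra.algebraMap_eq_smul_one, Matrix.isUnit_iff_isUnit_det,
    isUnit_iff_ne_zero, not_not] at hξS
  have h1map : (1 : Matrix (Fin N) (Fin N) ℝ).map Complex.ofReal = 1 := by
    ext i j; simp [Matrix.one_apply, apply_ite Complex.ofReal]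
  have h0map : (0 : Matrix (Fin N) (Fin N) ℝ).map Complex.ofReal = 0 := by
    ext i j; simp
  have hPmap : (a • (1 : Matrix (Fin N) (Fin N) ℝ) - b • A).map Complex.ofReal
      = (a:ℂ) • (1 : Matrix (Fin N) (Fin N) ℂ) - (b:ℂ) • A.map Complex.ofReal := by
    ext i j
    simp [Matrix.map_apply, Matrix.sub_apply, Matrix.smul_apply, Matrix.one_apply,
      apply_ite Complex.ofReal]
  have hQmap : (c • (1 : Matrix (Fin N) (Fin N) ℝ)).map Complex.ofReal
      = (c:ℂ) • (1 : Matrix (Fin N) (Fin N) ℂ) := by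
    ext i j
    simp [Matrix.map_apply, Matrix.smul_apply, Matrix.one_apply, apply_ite Complex.ofReal]
  rw [Matrix.fromBlocks_map, hPmap, hQmap, h1map, h0map] at hξS
  have hsub : (ξ • (1 : Matrix (Fin N ⊕ Fin N) (Fin N ⊕ Fin N) ℂ)) -
      Matrix.fromBlocks ((a:ℂ) • 1 - (b:ℂ) • A.map Complex.ofReal) ((c:ℂ) • 1) 1 0
      = Matrix.fromBlocks (ξ • 1 - ((a:ℂ) • 1 - (b:ℂ) • A.map Complex.ofReal))
          (-((c:ℂ) • 1)) (-1) (ξ • 1) := by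
    rw [← Matrix.fromBlocks_one, Matrix.fromBlocks_smul]
    ext i j
    rcases i with i|i <;> rcases j with j|j <;> simp
  rw [hsub] at hξS
  haveI instInv : Invertible (ξ • (1 : Matrix (Fin N) (Fin N) ℂ)) := by
    refine ⟨ξ⁻¹ • 1, ?_, ?_⟩ <;>
      simp [Matrix.smul_mul, Matrix.mul_smul, smul_smul, inv_mul_cancel₀ hξ0,
        mul_inv_cancel₀ hξ0]
  rw [Matrix.det_fromBlocks₂₂] at hξS
  have hinvof : ⅟(ξ • (1 : Matrix (Fin N) (Fin N) ℂ)) = ξ⁻¹ • 1 :=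
    invOf_eq_right_inv (by
      simp [Matrix.smul_mul, Matrix.mul_smul, smul_smul, mul_inv_cancel₀ hξ0,
        inv_mul_cancel₀ hξ0])
  rw [hinvof] at hξS
  set μ : ℂ := ((a:ℂ) + (c:ℂ) * ξ⁻¹ - ξ) / (b:ℂ) with hμdef
  have hkey : (b:ℂ) * μ = (a:ℂ) + (c:ℂ) * ξ⁻¹ - ξ := by
    rw [hμdef]; field_simp
  clear_value μ
  have hSchur : (ξ • 1 - ((a:ℂ) • 1 - (b:ℂ) • A.map Complex.ofReal)) -
      (-((c:ℂ) • 1)) * (ξ⁻¹ • 1) * (-1)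
      = (b:ℂ) • (A.map Complex.ofReal - μ • 1) := by
    have hprod : (-((c:ℂ) • (1 : Matrix (Fin N) (Fin N) ℂ))) * (ξ⁻¹ • 1) * (-1)
        = (ξ⁻¹ * (c:ℂ)) • 1 := by
      simp only [Matrix.neg_mul, Matrix.mul_neg, neg_neg, Matrix.smul_mul, Matrix.mul_smul,
        Matrix.one_mul, Matrix.mul_one, smul_neg, neg_neg, smul_smul]
    rw [hprod]
    ext i j
    simp only [Matrix.sub_apply, Matrix.smul_apply, Matrix.one_apply, Matrix.map_apply,
      smul_eq_mul]
    split_ifs with h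
    · simp only [mul_one]
      linear_combination hkey
    · simp only [mul_zero, sub_zero]
      ring
  rw [hSchur, Matrix.det_smul, Matrix.det_smul, Matrix.det_one, mul_one] at hξS
  have hdetA : (A.map Complex.ofReal - μ • 1).det = 0 := by
    rcases mul_eq_zero.1 hξS with h|h
    · exact absurd h (pow_ne_zero _ hξ0)
    · rcases mul_eq_zero.1 h with h'|h'
      · exact absurd h' (pow_ne_zero _ hbC)
      · exact h'
  have hdetA' : (μ • 1 - A.map Complex.ofReal).det = 0 := by
    rw [← neg_sub, Matrix.det_neg, hdetA, mul_zero]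
  have hμmem : μ ∈ spectrum ℂ (A.map Complex.ofReal) := by
    rw [spectrum.mem_iff, Algebra.algebraMap_eq_smul_one, Matrix.isUnit_iff_isUnit_det,
      isUnit_iff_ne_zero, not_not]
    exact hdetA'
  obtain ⟨t, htspec, htμ⟩ := spec_complex_real A hA.1 hμmem
  have ht0 : 0 < t := hposspec t htspec
  have htle : t ≤ lmax := hmax t htspec
  -- the quadratic equation
  have hkey' : (b:ℂ) * (t:ℂ) = (a:ℂ) + (c:ℂ) * ξ⁻¹ - ξ := by rw [← htμ]; exact hkey
  have hquad : ξ^2 = ((a - b*t : ℝ):ℂ) * ξ + ((c:ℝ):ℂ) := by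
    have h := hkey'
    field_simp at h
    push_cast
    linear_combination h
  -- the inequalities
  have hc2 : c < 1 := by
    rw [hc, div_lt_one hd]; linarith
  have hc1 : -1 < c := by
    rw [hc, lt_div_iff₀ hd]; linarith
  have h1c : 1 - c = a := by
    rw [hc, ha]; field_simp; ring
  have hp2 : a - b*t < 1 - c := by
    have hbt : 0 < b*t := mul_pos hb0R ht0
    linarith
  have hp1 : -(1 - c) < a - b*t := by
    have ht4 : t < 4*κ := by linarith
    have hba : b * (4*κ) = 2*a := by
      rw [hb, ha]; field_simp
    have : b*t < b*(4*κ) := by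
      exact mul_lt_mul_of_pos_left ht4 hb0R
    rw [h1c]
    linarith
  exact quad_root_abs_lt_one ξ hquad hc1 hc2 hp1 hp2
end

section
/- There exist ε̃ > 0, μ > 0 with 4ε̃ > μ (so the eigenvalues of S = [[(4ε̃-2μ)/(1+2ε̃), (1-2ε̃)/(1+2ε̃)], [1,0]] have modulus less than 1) such that the spectral norm ‖S‖₂ > 1. -/
/-- There exist `ε̃ > 0`, `μ > 0` satisfying the eigenvalue stability condition `4ε̃ > μ`
for which the HM amplification block `S = [[(4ε̃-2μ)/(1+2ε̃), (1-2ε̃)/(1+2ε̃)], [1,0]]`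
has spectral norm greater than one. -/
theorem stmt_19 :
    ∃ (e μ : ℝ), 0 < e ∧ 0 < μ ∧ 4 * e > μ ∧
      1 < ‖Matrix.toEuclideanCLM (𝕜 := ℝ)
            (!![(4 * e - 2 * μ) / (1 + 2 * e), (1 - 2 * e) / (1 + 2 * e); 1, 0] :
              Matrix (Fin 2) (Fin 2) ℝ)‖ := by
  refine ⟨1, 1, one_pos, one_pos, by norm_num, ?_⟩
  set M : Matrix (Fin 2) (Fin 2) ℝ :=
    !![(4 * 1 - 2 * 1) / (1 + 2 * 1), (1 - 2 * 1) / (1 + 2 * 1); 1, 0]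
  set T := Matrix.toEuclideanCLM (𝕜 := ℝ) M
  set x : EuclideanSpace ℝ (Fin 2) := (WithLp.equiv 2 (Fin 2 → ℝ)).symm ![1, 0]
  have hx : ‖x‖ ≤ 1 := by
    rw [EuclideanSpace.norm_eq]
    simp [x, Fin.sum_univ_two]
  have hTx : T x = (WithLp.equiv 2 (Fin 2 → ℝ)).symm (M.mulVec ![1, 0]) := by
    exact Matrix.toEuclideanCLM_toLp (𝕜 := ℝ) M ![1, 0]
  have hnorm : ‖T x‖ ^ 2 = (2/3 : ℝ)^2 + 1 := by
    rw [hTx, EuclideanSpace.norm_eq]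
    rw [Real.sq_sqrt (by positivity)]
    have : M.mulVec ![1, 0] = ![2/3, 1] := by
      funext i
      fin_cases i <;> simp [M, Matrix.mulVec, dotProduct, Fin.sum_univ_two] <;> norm_num
    rw [this]
    simp [Fin.sum_univ_two, sq_abs]
  have h1 : (1:ℝ) < ‖T x‖ := by
    nlinarith [norm_nonneg (T x)]
  calc (1:ℝ) < ‖T x‖ := h1
    _ ≤ ‖T‖ := T.unit_le_opNorm x hx
end
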